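/- arXiv:1204.5755 — 2 statements merged into one kernel-verified Lean document; each statement's English description precedes it below -/
import Mathlib

section
/- If a recurrent infinite word has a factor whose abelian class has exactly one semi-abelian return, then the word is periodic. -/
/-- The factor of length `n` of the infinite word `w` starting at position `i`. -/
def wordAt {α : Type*} (w : ℕ → α) (i n : ℕ) : List α :=
  (List.range n).map (fun k => w (i + k))

/-- `u` is a factor of the infinite word `w`. -/
def IsFactorW {α : Type*} (w : ℕ → α) (u : List α) : Prop :=
  ∃ i, u = wordAt w i u.length

/-- `w` is recurrent: every factor occurs infinitely often. -/
def RecurrentW {α : Type*} (w : ℕ → α) : Prop :=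
  ∀ u, IsFactorW w u → ∀ N, ∃ i, N ≤ i ∧ u = wordAt w i u.length

/-- `w` is (purely) periodic. -/
def PeriodicW {α : Type*} (w : ℕ → α) : Prop :=
  ∃ T, 0 < T ∧ ∀ n, w (n + T) = w n

/-- `w` is ultimately periodic. -/
def UltPeriodicW {α : Type*} (w : ℕ → α) : Prop :=
  ∃ T, 0 < T ∧ ∃ n₀, ∀ n, n₀ ≤ n → w (n + T) = w n

/-- Two finite words are abelian equivalent: same number of occurrences of each letter. -/
def AbEquiv {α : Type*} [DecidableEq α] (u v : List α) : Prop :=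
  ∀ a : α, u.count a = v.count a

/-- Positions of occurrences of words abelian equivalent to `u` in `w`. -/
def abOcc {α : Type*} [DecidableEq α] (w : ℕ → α) (u : List α) : Set ℕ :=
  {i | AbEquiv (wordAt w i u.length) u}

/-- The semi-abelian returns to (the abelian class of) `u` in `w`: words extending from one
occurrence of the abelian class of `u` to the next one. -/
def semiAbReturns {α : Type*} [DecidableEq α] (w : ℕ → α) (u : List α) : Set (List α) :=
  {r | ∃ i j, i ∈ abOcc w u ∧ j ∈ abOcc w u ∧ i < j ∧
      (∀ k, i < k → k < j → k ∉ abOcc w u) ∧ r = wordAt w i (j - i)}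

/-- Positions of (exact) occurrences of `u` in `w`. -/
def occW {α : Type*} [DecidableEq α] (w : ℕ → α) (u : List α) : Set ℕ :=
  {i | u = wordAt w i u.length}

/-- The ordinary return words of `u` in `w`. -/
def returnWords {α : Type*} [DecidableEq α] (w : ℕ → α) (u : List α) : Set (List α) :=
  {r | ∃ i j, i ∈ occW w u ∧ j ∈ occW w u ∧ i < j ∧
      (∀ k, i < k → k < j → k ∉ occW w u) ∧ r = wordAt w i (j - i)}

/-- `u` has exactly `k` semi-abelian returns in `w`. -/
def ExactlyKSemiAbReturns {α : Type*} [DecidableEq α] (w : ℕ → α) (u : List α) (k : ℕ) : Prop :=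
  ∃ f : Fin k → List α, Function.Injective f ∧ semiAbReturns w u = Set.range f

/-- `u` has exactly `k` abelian returns in `w`: there are `k` pairwise non-abelian-equivalent
representatives so that every semi-abelian return is abelian equivalent to exactly one of them,
and each representative is realized. -/
def ExactlyKAbReturns {α : Type*} [DecidableEq α] (w : ℕ → α) (u : List α) (k : ℕ) : Prop :=
  ∃ f : Fin k → List α,
    (∀ i j, AbEquiv (f i) (f j) → i = j) ∧
    (∀ r ∈ semiAbReturns w u, ∃ i, AbEquiv r (f i)) ∧
    (∀ i, ∃ r ∈ semiAbReturns w u, AbEquiv r (f i))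

/-- `u` has at most `k` abelian returns in `w`. -/
def AtMostKAbReturns {α : Type*} [DecidableEq α] (w : ℕ → α) (u : List α) (k : ℕ) : Prop :=
  ∃ f : Fin k → List α, ∀ r ∈ semiAbReturns w u, ∃ i, AbEquiv r (f i)

/-- `u` has at least `k` abelian returns in `w`. -/
def AtLeastKAbReturns {α : Type*} [DecidableEq α] (w : ℕ → α) (u : List α) (k : ℕ) : Prop :=
  ∃ f : Fin k → List α,
    (∀ i j, AbEquiv (f i) (f j) → i = j) ∧
    (∀ i, ∃ r ∈ semiAbReturns w u, AbEquiv r (f i))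

/-- `u` has at least two semi-abelian returns in `w`. -/
def AtLeastTwoSemiAbReturns {α : Type*} [DecidableEq α] (w : ℕ → α) (u : List α) : Prop :=
  ∃ r₁ r₂, r₁ ∈ semiAbReturns w u ∧ r₂ ∈ semiAbReturns w u ∧ r₁ ≠ r₂

/-- The factor complexity of `w`. -/
noncomputable def complexityW {α : Type*} (w : ℕ → α) (n : ℕ) : ℕ :=
  {u : List α | u.length = n ∧ IsFactorW w u}.ncard

/-- A Sturmian word: aperiodic binary word with factor complexity `n + 1`. -/
def SturmianW (w : ℕ → Bool) : Prop :=
  ¬ UltPeriodicW w ∧ ∀ n, complexityW w n = n + 1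

/-- Right special factor of a binary word. -/
def RightSpecial (w : ℕ → Bool) (B : List Bool) : Prop :=
  IsFactorW w (B ++ [false]) ∧ IsFactorW w (B ++ [true])

/-- Left special factor of a binary word. -/
def LeftSpecial (w : ℕ → Bool) (B : List Bool) : Prop :=
  IsFactorW w (false :: B) ∧ IsFactorW w (true :: B)

/-- Bispecial factor of a binary word. -/
def Bispecial (w : ℕ → Bool) (B : List Bool) : Prop :=
  RightSpecial w B ∧ LeftSpecial w B

/-- `w` is `c`-balanced. -/
def CBalanced {α : Type*} [DecidableEq α] (w : ℕ → α) (c : ℕ) : Prop :=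
  ∀ u v : List α, IsFactorW w u → IsFactorW w v → u.length = v.length →
    ∀ a : α, |((u.count a : ℤ) - (v.count a : ℤ))| ≤ (c : ℤ)

/-!
Recurrence makes the occurrences of the abelian class of `u` unbounded, so every occurrence `i`
has a next one `j`, and `w[i, j)` is a semi-abelian return. If there is only one return `r`, then
`j = i + |r|` and `w[i, i + |r|) = r`: starting from one occurrence, `w` is the concatenation
`r r r ⋯`, hence periodic from that point on. Recurrence turns this into pure periodicity,
since the prefix `w[0, n + |r|]` reoccurs inside the periodic tail.
-/

section Words

variable {α : Type*}

@[simp]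
lemma wordAt_length (w : ℕ → α) (i n : ℕ) : (wordAt w i n).length = n := by
  simp [wordAt]

lemma apply_add_eq_of_wordAt_eq {w : ℕ → α} {i j n : ℕ} (h : wordAt w i n = wordAt w j n)
    {k : ℕ} (hk : k < n) : w (i + k) = w (j + k) := by
  have hk' : k < (wordAt w i n).length := by simpa using hk
  simpa [wordAt] using List.getElem_of_eq h hk'

lemma add_period_eq_of_forall_wordAt_eq {w : ℕ → α} {i₀ T : ℕ} {r : List α}
    (h : ∀ k, wordAt w (i₀ + k * T) T = r) (n : ℕ) (hn : i₀ ≤ n) : w (n + T) = w n := by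
  rcases Nat.eq_zero_or_pos T with rfl | hT
  · rfl
  obtain ⟨q, m, hm, rfl⟩ : ∃ q m, m < T ∧ n = i₀ + q * T + m :=
    ⟨(n - i₀) / T, (n - i₀) % T, Nat.mod_lt _ hT, by
      have := Nat.div_add_mod' (n - i₀) T; omega⟩
  have hblock := apply_add_eq_of_wordAt_eq ((h (q + 1)).trans (h q).symm) hm
  rwa [add_one_mul, ← add_assoc, add_right_comm (i₀ + q * T)] at hblock

lemma RecurrentW.periodicW {w : ℕ → α} (hrec : RecurrentW w) {T n₀ : ℕ} (hT : 0 < T)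
    (h : ∀ n, n₀ ≤ n → w (n + T) = w n) : PeriodicW w := by
  refine ⟨T, hT, fun n => ?_⟩
  obtain ⟨j, hj, hprefix⟩ := hrec (wordAt w 0 (n + T + 1)) ⟨0, by simp⟩ n₀
  rw [wordAt_length] at hprefix
  have hn := apply_add_eq_of_wordAt_eq hprefix (k := n) (by omega)
  have hnT := apply_add_eq_of_wordAt_eq hprefix (k := n + T) (by omega)
  rw [zero_add] at hn hnT
  rw [hnT, ← add_assoc, h (j + n) (by omega), hn]

end Words

section SemiAbelianReturns

variable {α : Type*} [DecidableEq α] {w : ℕ → α} {u r : List α}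

lemma RecurrentW.exists_mem_abOcc_ge (hrec : RecurrentW w) (hu : IsFactorW w u) (N : ℕ) :
    ∃ i, N ≤ i ∧ i ∈ abOcc w u := by
  obtain ⟨i, hi, hocc⟩ := hrec u hu N
  exact ⟨i, hi, fun a => by rw [← hocc]⟩

lemma length_pos_of_mem_semiAbReturns (hr : r ∈ semiAbReturns w u) : 0 < r.length := by
  obtain ⟨i, j, -, -, hij, -, rfl⟩ := hr
  simpa using hij

lemma wordAt_eq_and_add_mem_abOcc_of_semiAbReturns_subset (hret : semiAbReturns w u ⊆ {r})
    {i : ℕ} (hi : i ∈ abOcc w u) (hnext : ∃ j, i < j ∧ j ∈ abOcc w u) :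
    wordAt w i r.length = r ∧ i + r.length ∈ abOcc w u := by
  classical
  obtain ⟨hij, hj⟩ := Nat.find_spec hnext
  have hreturn : wordAt w i (Nat.find hnext - i) = r :=
    hret ⟨i, _, hi, hj, hij, fun k hik hkj hk => Nat.find_min hnext hkj ⟨hik, hk⟩, rfl⟩
  have hlen : Nat.find hnext - i = r.length := by simpa using congrArg List.length hreturn
  rw [← hlen, Nat.add_sub_cancel' hij.le]
  exact ⟨hreturn, hj⟩

lemma RecurrentW.forall_wordAt_eq_of_semiAbReturns_subset (hrec : RecurrentW w)
    (hu : IsFactorW w u) (hret : semiAbReturns w u ⊆ {r}) {i₀ : ℕ} (hi₀ : i₀ ∈ abOcc w u)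
    (k : ℕ) :
    wordAt w (i₀ + k * r.length) r.length = r ∧ i₀ + (k + 1) * r.length ∈ abOcc w u := by
  induction k with
  | zero =>
    simpa using wordAt_eq_and_add_mem_abOcc_of_semiAbReturns_subset hret hi₀
      (hrec.exists_mem_abOcc_ge hu (i₀ + 1))
  | succ k ih =>
    have hnext := hrec.exists_mem_abOcc_ge hu (i₀ + (k + 1) * r.length + 1)
    rw [add_one_mul (k + 1), ← add_assoc]
    exact wordAt_eq_and_add_mem_abOcc_of_semiAbReturns_subset hret ih.2 hnext

end SemiAbelianReturns

/-- If a recurrent word has a factor with exactly one semi-abelian return, then the word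
is periodic. -/
theorem stmt3 {α : Type*} [DecidableEq α] (w : ℕ → α) (hrec : RecurrentW w)
    (h : ∃ u, IsFactorW w u ∧ u ≠ [] ∧ ExactlyKSemiAbReturns w u 1) :
    PeriodicW w := by
  obtain ⟨u, hu, -, f, -, hreturns⟩ := h
  have hret : semiAbReturns w u ⊆ {f 0} := by
    rw [hreturns]
    rintro _ ⟨i, rfl⟩
    rw [Subsingleton.elim i 0]
    rfl
  have hT : 0 < (f 0).length :=
    length_pos_of_mem_semiAbReturns (u := u) (by rw [hreturns]; exact ⟨0, rfl⟩)
  obtain ⟨i₀, -, hocc⟩ := hrec.exists_mem_abOcc_ge hu 0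
  exact hrec.periodicW hT
    (add_period_eq_of_forall_wordAt_eq fun k =>
      (hrec.forall_wordAt_eq_of_semiAbReturns_subset hu hret hocc k).1)
end

section
/- In the Thue–Morse word, the abelian class of the factor 01 has exactly four semi-abelian returns, namely {0, 1, 01, 10}, and exactly three abelian returns. -/
/-- The Thue–Morse word (here via the binary digit-sum parity definition of the fixed
point of `0 ↦ 01, 1 ↦ 10` starting with `0`). -/
def thueMorse : ℕ → Bool := fun n => (Nat.digits 2 n).count 1 % 2 == 1

/-!
Since `t (2n) = t n` and `t (2n+1) = ¬ t n`, the Thue–Morse word is a concatenation of the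
blocks `01` and `10`, so every even position starts an occurrence of the abelian class of `01`.
Consecutive occurrences are therefore at distance 1 or 2. A return of length 1 is a single
letter; a return of length 2 starts at an occurrence, so it is `01` or `10`. All four are seen
in the prefix `0110100`, and since `01` and `10` are abelian equivalent they give three abelian
returns.
-/

lemma wordAt_one {α : Type*} (w : ℕ → α) (i : ℕ) : wordAt w i 1 = [w i] := rfl

lemma wordAt_two {α : Type*} (w : ℕ → α) (i : ℕ) : wordAt w i 2 = [w i, w (i + 1)] := rfl

section Returns

variable {α : Type*} [DecidableEq α] {w : ℕ → α} {u : List α} {i : ℕ}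

lemma wordAt_one_mem_semiAbReturns (hi : i ∈ abOcc w u) (hi₁ : i + 1 ∈ abOcc w u) :
    wordAt w i 1 ∈ semiAbReturns w u :=
  ⟨i, i + 1, hi, hi₁, by omega, fun _ _ _ => by omega, by simp⟩

lemma wordAt_two_mem_semiAbReturns (hi : i ∈ abOcc w u) (hi₁ : i + 1 ∉ abOcc w u)
    (hi₂ : i + 2 ∈ abOcc w u) : wordAt w i 2 ∈ semiAbReturns w u := by
  refine ⟨i, i + 2, hi, hi₂, by omega, fun k hik hki => ?_, by simp⟩
  obtain rfl : k = i + 1 := by omega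
  exact hi₁

lemma exists_of_mem_semiAbReturns (hgap : ∀ i, i ∈ abOcc w u ∨ i + 1 ∈ abOcc w u)
    {r : List α} (hr : r ∈ semiAbReturns w u) :
    ∃ i ∈ abOcc w u, r = wordAt w i 1 ∨ (i + 1 ∉ abOcc w u ∧ r = wordAt w i 2) := by
  obtain ⟨i, j, hi, -, hij, hbetween, rfl⟩ := hr
  have hji : j ≤ i + 2 := by
    by_contra! h
    rcases hgap (i + 1) with h₁ | h₂
    · exact hbetween (i + 1) (by omega) (by omega) h₁
    · exact hbetween (i + 2) (by omega) (by omega) h₂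
  refine ⟨i, hi, ?_⟩
  obtain rfl | rfl : j = i + 1 ∨ j = i + 2 := by omega
  · left; simp
  · right; exact ⟨hbetween (i + 1) (by omega) (by omega), by simp⟩

end Returns

lemma abEquiv_iff_count_bool (u v : List Bool) :
    AbEquiv u v ↔ u.count false = v.count false ∧ u.count true = v.count true :=
  Bool.forall_bool

lemma mem_abOcc_false_true_iff (w : ℕ → Bool) (i : ℕ) :
    i ∈ abOcc w [false, true] ↔ w i ≠ w (i + 1) := by
  simp only [abOcc, Set.mem_ofPred_eq, abEquiv_iff_count_bool, List.length_cons,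
    List.length_nil, zero_add, Nat.reduceAdd, wordAt_two]
  cases w i <;> cases w (i + 1) <;> decide

lemma semiAbReturns_false_true_subset (w : ℕ → Bool)
    (hgap : ∀ i, i ∈ abOcc w [false, true] ∨ i + 1 ∈ abOcc w [false, true]) :
    semiAbReturns w [false, true] ⊆ {[false], [true], [false, true], [true, false]} := by
  intro r hr
  obtain ⟨i, hi, rfl | ⟨-, rfl⟩⟩ := exists_of_mem_semiAbReturns hgap hr
  · rw [wordAt_one]
    cases w i <;> simp
  · rw [mem_abOcc_false_true_iff] at hi
    rw [wordAt_two]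
    revert hi
    cases w i <;> cases w (i + 1) <;> simp

lemma exactlyKAbReturns_three_of_semiAbReturns_eq (w : ℕ → Bool)
    (h : semiAbReturns w [false, true] = {[false], [true], [false, true], [true, false]}) :
    ExactlyKAbReturns w [false, true] 3 := by
  refine ⟨![[false], [true], [false, true]], ?_, ?_, fun i => ⟨_, ?_, fun _ => rfl⟩⟩
  · simp only [abEquiv_iff_count_bool]
    decide
  · simp only [h, Set.mem_insert_iff, Set.mem_singleton_iff, forall_eq_or_imp, forall_eq,
      abEquiv_iff_count_bool]
    decide
  · fin_cases i <;> simp [h]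

lemma thueMorse_two_mul (n : ℕ) : thueMorse (2 * n) = thueMorse n := by
  rcases n.eq_zero_or_pos with rfl | hn
  · rfl
  · simp [thueMorse, Nat.digits_base_mul one_lt_two hn]

lemma thueMorse_two_mul_add_one (n : ℕ) : thueMorse (2 * n + 1) = !thueMorse n := by
  have hdigits : Nat.digits 2 (2 * n + 1) = 1 :: Nat.digits 2 n := by
    rw [add_comm]; exact Nat.digits_add 2 one_lt_two 1 n one_lt_two (Or.inl one_ne_zero)
  simp only [thueMorse, hdigits, List.count_cons_self]
  rcases Nat.mod_two_eq_zero_or_one ((Nat.digits 2 n).count 1) with h | h <;>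
    simp [Nat.add_mod, h]

lemma two_mul_mem_abOcc_thueMorse (n : ℕ) : 2 * n ∈ abOcc thueMorse [false, true] := by
  rw [mem_abOcc_false_true_iff, thueMorse_two_mul_add_one, thueMorse_two_mul]
  cases thueMorse n <;> decide

lemma mem_abOcc_thueMorse_or_succ (i : ℕ) :
    i ∈ abOcc thueMorse [false, true] ∨ i + 1 ∈ abOcc thueMorse [false, true] := by
  obtain ⟨n, rfl | rfl⟩ := Nat.even_or_odd' i
  · exact Or.inl (two_mul_mem_abOcc_thueMorse n)
  · exact Or.inr (two_mul_mem_abOcc_thueMorse (n + 1))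

/-- In the Thue–Morse word, the abelian class of `01` has exactly the four semi-abelian
returns `{0, 1, 01, 10}`, and exactly three abelian returns. -/
theorem stmt17 :
    semiAbReturns thueMorse [false, true] =
      {[false], [true], [false, true], [true, false]} ∧
    ExactlyKAbReturns thueMorse [false, true] 3 := by
  have hset : semiAbReturns thueMorse [false, true] =
      {[false], [true], [false, true], [true, false]} := by
    refine (semiAbReturns_false_true_subset thueMorse mem_abOcc_thueMorse_or_succ).antisymm ?_
    have occ := mem_abOcc_false_true_iff thueMorse
    simp only [Set.insert_subset_iff, Set.singleton_subset_iff]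
    refine ⟨?_, ?_, ?_, ?_⟩
    · exact wordAt_one_mem_semiAbReturns (i := 3) ((occ 3).2 (by decide)) ((occ 4).2 (by decide))
    · exact wordAt_one_mem_semiAbReturns (i := 2) ((occ 2).2 (by decide)) ((occ 3).2 (by decide))
    · exact wordAt_two_mem_semiAbReturns (i := 0) ((occ 0).2 (by decide))
        ((occ 1).not.2 (by decide)) ((occ 2).2 (by decide))
    · exact wordAt_two_mem_semiAbReturns (i := 4) ((occ 4).2 (by decide))
        ((occ 5).not.2 (by decide)) ((occ 6).2 (by decide))
  exact ⟨hset, exactlyKAbReturns_three_of_semiAbReturns_eq thueMorse hset⟩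
end
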